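/- Let u be a solution on (0, y₀) of the one-dimensional equation y²(-u'' + λ_m u) + (n-2) y u' - ((n-1)²/4) u = k² u with k > 0, λ_m > 0. If u satisfies liminf_{R→∞} (1/log R) ∫_{1/R}^{y₀} |u(y)|² dy/yⁿ = 0 then u ≡ 0 on (0, y₀). -/

import Mathlib

/-!
With `a = (n - 1) / 2` and `v = y u' - a u`, the equation becomes the first-order system
`y u' = v + a u`, `y v' = a v + (λ y² - k²) u`. The energy `E = (|v|² + k² |u|²) y^(-2a)`
satisfies `E' = 2 λ y Re(ū v) y^(-2a)`, so `|E'| ≤ (λ y₀ / k) E` and, by Grönwall, `E` either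
vanishes identically or is pinched between two positive constants on `(0, y₀)`. In the second
case `(Re(ū v) y^(-2a))' = (|v|² + (λ y² - k²) |u|²) y^(-2a-1)`, and integrating this against
`E ≥ ε` gives `2 k² ∫_{1/R}^{y₀} |u|² y^(-n) dy ≥ ε log R - O(1)`, so the liminf is positive.
-/

open MeasureTheory Set Filter Real

lemma monotoneOn_mul_exp_of_neg_mul_le_deriv {f f' : ℝ → ℝ} {s : Set ℝ} {c : ℝ}
    (hs : Convex ℝ s) (hf : ∀ x ∈ s, HasDerivAt f (f' x) x)
    (hf' : ∀ x ∈ s, -(c * f x) ≤ f' x) :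
    MonotoneOn (fun x => f x * exp (c * x)) s := by
  have hd : ∀ x ∈ s,
      HasDerivAt (fun x => f x * exp (c * x)) ((f' x + c * f x) * exp (c * x)) x :=
    fun x hx => ((hf x hx).mul ((hasDerivAt_id' x).const_mul c).exp).congr_deriv (by ring)
  refine monotoneOn_of_deriv_nonneg hs (fun x hx => (hd x hx).continuousAt.continuousWithinAt)
    (fun x hx => (hd x (interior_subset hx)).differentiableAt.differentiableWithinAt) fun x hx => ?_
  rw [(hd x (interior_subset hx)).deriv]
  exact mul_nonneg (by linarith [hf' x (interior_subset hx)]) (exp_pos _).le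

lemma le_mul_exp_of_abs_deriv_le {f f' : ℝ → ℝ} {s : Set ℝ} {C : ℝ} (hs : Convex ℝ s)
    (hf : ∀ x ∈ s, HasDerivAt f (f' x) x) (hf' : ∀ x ∈ s, |f' x| ≤ C * f x)
    {x y : ℝ} (hx : x ∈ s) (hy : y ∈ s) : f x ≤ f y * exp (C * |x - y|) := by
  rcases le_total x y with hxy | hyx
  · have hmono := monotoneOn_mul_exp_of_neg_mul_le_deriv hs hf
      (fun z hz => neg_le_of_abs_le (hf' z hz)) hx hy hxy
    rw [abs_of_nonpos (sub_nonpos.2 hxy), neg_sub, mul_sub, exp_sub, ← mul_div_assoc,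
      le_div_iff₀ (exp_pos _)]
    exact hmono
  · have hanti := monotoneOn_mul_exp_of_neg_mul_le_deriv (f := -f) (c := -C) hs
      (fun z hz => (hf z hz).neg) (fun z hz => by simpa using le_of_abs_le (hf' z hz)) hy hx hyx
    rw [abs_of_nonneg (sub_nonneg.2 hyx), show C * (x - y) = -C * y - -C * x by ring, exp_sub,
      ← mul_div_assoc, le_div_iff₀ (exp_pos _)]
    simpa using hanti

lemma hasDerivAt_rpow_neg_two_mul (a : ℝ) {y : ℝ} (hy : y ≠ 0) :
    HasDerivAt (fun y : ℝ => y ^ (-(2 * a))) (-(2 * a) * y ^ (-(2 * a)) / y) y := by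
  convert hasDerivAt_rpow_const (p := -(2 * a)) (Or.inl hy) using 1
  rw [rpow_sub_one hy, mul_div_assoc]

lemma integrableOn_Ioo_of_le_div {ρ : ℝ → ℝ} {q b D : ℝ} (hq : 0 < q)
    (hρ : ContinuousOn ρ (Ioo q b)) (h0 : ∀ x ∈ Ioo q b, 0 ≤ ρ x)
    (hD : ∀ x ∈ Ioo q b, ρ x ≤ D / x) : IntegrableOn ρ (Ioo q b) := by
  refine Integrable.mono' (g := fun _ => |D| / q) (integrableOn_const measure_Ioo_lt_top.ne)
    (hρ.aestronglyMeasurable measurableSet_Ioo) ?_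
  filter_upwards [ae_restrict_mem measurableSet_Ioo] with x hx
  have hx0 : 0 < x := hq.trans hx.1
  rw [Real.norm_of_nonneg (h0 x hx)]
  calc ρ x ≤ D / x := hD x hx
    _ ≤ |D| / x := by gcongr; exact le_abs_self D
    _ ≤ |D| / q := by gcongr; exact hx.1.le

lemma setIntegral_Ioo_le_mul_log {ρ : ℝ → ℝ} {q b D : ℝ} (hq : 0 < q) (hqb : q ≤ b)
    (hρ : IntegrableOn ρ (Ioo q b)) (hD : ∀ x ∈ Ioo q b, ρ x ≤ D / x) :
    ∫ x in Ioo q b, ρ x ≤ D * log (b / q) := by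
  have hinv : IntegrableOn (fun x => D / x) (Ioo q b) := by
    refine (ContinuousOn.integrableOn_Icc ?_).mono_set Ioo_subset_Icc_self
    exact continuousOn_const.div continuousOn_id fun x hx => (hq.trans_le hx.1).ne'
  calc ∫ x in Ioo q b, ρ x ≤ ∫ x in Ioo q b, D / x :=
        setIntegral_mono_on hρ hinv measurableSet_Ioo hD
    _ = D * log (b / q) := by
      simp only [div_eq_mul_inv D]
      rw [← integral_Ioc_eq_integral_Ioo, ← intervalIntegral.integral_of_le hqb,
        intervalIntegral.integral_const_mul, integral_inv_of_pos hq (hq.trans_le hqb)]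

/-- The upper bound is needed because the `liminf` of a real function that is not bounded above
is the junk value `0`. -/
lemma liminf_inv_log_mul_pos {f : ℝ → ℝ} {c A D B : ℝ} (hc : 0 < c)
    (hlow : ∀ᶠ R in atTop, c * log R + A ≤ f R)
    (hup : ∀ᶠ R in atTop, f R ≤ D * log R + B) :
    0 < liminf (fun R => (log R)⁻¹ * f R) atTop := by
  have hlog : ∀ᶠ R in atTop, 0 < log R := tendsto_log_atTop.eventually_gt_atTop 0
  have hlim (C₁ C₂ : ℝ) :
      Tendsto (fun R => (log R)⁻¹ * (C₁ * log R + C₂)) atTop (nhds C₁) := by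
    have h := (tendsto_const_nhds (x := C₁)).add
      (tendsto_log_atTop.inv_tendsto_atTop.const_mul C₂)
    rw [mul_zero, add_zero] at h
    refine h.congr' ?_
    filter_upwards [hlog] with R hR
    simp only [Pi.inv_apply]
    field_simp
  have hbdd : IsBoundedUnder (· ≤ ·) atTop (fun R => (log R)⁻¹ * f R) := by
    refine (hlim D B).isBoundedUnder_le.mono_le ?_
    filter_upwards [hup, hlog] with R h1 h2
    exact mul_le_mul_of_nonneg_left h1 (inv_nonneg.2 h2.le)
  refine (half_pos hc).trans_le (le_liminf_of_le hbdd.isCoboundedUnder_ge ?_)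
  filter_upwards [(hlim c A).eventually (lt_mem_nhds (half_lt_self hc)), hlow, hlog]
    with R h1 h2 h3
  exact h1.le.trans (mul_le_mul_of_nonneg_left h2 (inv_nonneg.2 h3.le))

section NormedAddCommGroup

variable {E : Type*} [NormedAddCommGroup E]

noncomputable def radialEnergy (a k : ℝ) (u v : ℝ → E) (y : ℝ) : ℝ :=
  (‖v y‖ ^ 2 + k ^ 2 * ‖u y‖ ^ 2) * y ^ (-(2 * a))

/-- `‖u y‖² / yⁿ` with `n = 2a + 1`. -/
noncomputable def radialDensity (a : ℝ) (u : ℝ → E) (y : ℝ) : ℝ :=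
  ‖u y‖ ^ 2 * y ^ (-(2 * a)) / y

variable {a k : ℝ} {u v : ℝ → E}

lemma radialEnergy_nonneg {y : ℝ} (hy : 0 ≤ y) : 0 ≤ radialEnergy a k u v y := by
  unfold radialEnergy
  have := rpow_nonneg hy (-(2 * a))
  positivity

lemma radialDensity_nonneg {y : ℝ} (hy : 0 ≤ y) : 0 ≤ radialDensity a u y := by
  unfold radialDensity
  have := rpow_nonneg hy (-(2 * a))
  positivity

lemma radialDensity_le {M y : ℝ} (hk : k ≠ 0) (hy : 0 < y) (hM : radialEnergy a k u v y ≤ M) :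
    radialDensity a u y ≤ M / k ^ 2 / y := by
  have hk2 : 0 < k ^ 2 := by positivity
  have := rpow_nonneg hy.le (-(2 * a))
  unfold radialDensity radialEnergy at *
  rw [div_right_comm, le_div_iff₀ hk2, div_mul_eq_mul_div]
  refine div_le_div_of_nonneg_right ?_ hy.le
  nlinarith [mul_nonneg (sq_nonneg ‖v y‖) this]

end NormedAddCommGroup

section InnerProductSpace

variable {E : Type*} [NormedAddCommGroup E] [InnerProductSpace ℝ E]

lemma two_mul_abs_mul_abs_inner_le (k : ℝ) (x z : E) :
    2 * |k| * |inner ℝ x z| ≤ ‖z‖ ^ 2 + k ^ 2 * ‖x‖ ^ 2 := by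
  calc 2 * |k| * |inner ℝ x z| ≤ 2 * (|k| * ‖x‖) * ‖z‖ := by
        rw [← mul_assoc, mul_assoc _ ‖x‖]
        gcongr
        exact abs_real_inner_le_norm x z
    _ ≤ (|k| * ‖x‖) ^ 2 + ‖z‖ ^ 2 := two_mul_le_add_sq _ _
    _ = ‖z‖ ^ 2 + k ^ 2 * ‖x‖ ^ 2 := by rw [mul_pow, sq_abs]; ring

noncomputable def radialCross (a : ℝ) (u v : ℝ → E) (y : ℝ) : ℝ :=
  inner ℝ (u y) (v y) * y ^ (-(2 * a))

lemma two_mul_abs_mul_abs_radialCross_le {a k : ℝ} {u v : ℝ → E} {y : ℝ} (hy : 0 ≤ y) :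
    2 * |k| * |radialCross a u v y| ≤ radialEnergy a k u v y := by
  rw [radialCross, abs_mul, abs_of_nonneg (rpow_nonneg hy _), ← mul_assoc]
  exact mul_le_mul_of_nonneg_right (two_mul_abs_mul_abs_inner_le k _ _) (rpow_nonneg hy _)

def IsRadialPair (a lam k y₀ : ℝ) (u v : ℝ → E) : Prop :=
  ∀ y ∈ Ioo 0 y₀, HasDerivAt u (y⁻¹ • (v y + a • u y)) y ∧
    HasDerivAt v (y⁻¹ • (a • v y + (lam * y ^ 2 - k ^ 2) • u y)) y

namespace IsRadialPair

variable {a lam k y₀ : ℝ} {u v : ℝ → E}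

lemma hasDerivAt_radialEnergy (h : IsRadialPair a lam k y₀ u v) {y : ℝ}
    (hy : y ∈ Ioo 0 y₀) :
    HasDerivAt (radialEnergy a k u v) (2 * lam * y * radialCross a u v y) y := by
  obtain ⟨hu, hv⟩ := h y hy
  have hy0 : y ≠ 0 := hy.1.ne'
  refine ((hv.norm_sq.add (hu.norm_sq.const_mul (k ^ 2))).mul
    (hasDerivAt_rpow_neg_two_mul a hy0)).congr_deriv ?_
  simp only [radialCross, Pi.add_apply, inner_add_right, real_inner_smul_right,
    real_inner_self_eq_norm_sq, real_inner_comm (u y) (v y)]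
  field_simp
  ring

lemma hasDerivAt_radialCross (h : IsRadialPair a lam k y₀ u v) {y : ℝ} (hy : y ∈ Ioo 0 y₀) :
    HasDerivAt (radialCross a u v)
      ((‖v y‖ ^ 2 + (lam * y ^ 2 - k ^ 2) * ‖u y‖ ^ 2) * y ^ (-(2 * a)) / y) y := by
  obtain ⟨hu, hv⟩ := h y hy
  have hy0 : y ≠ 0 := hy.1.ne'
  refine ((hu.inner ℝ hv).mul (hasDerivAt_rpow_neg_two_mul a hy0)).congr_deriv ?_
  simp only [inner_add_right, inner_add_left, real_inner_smul_right, real_inner_smul_left,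
    real_inner_self_eq_norm_sq]
  field_simp
  ring

lemma radialEnergy_le_mul_exp (h : IsRadialPair a lam k y₀ u v) (hlam : 0 ≤ lam) (hk : k ≠ 0)
    {x y : ℝ} (hx : x ∈ Ioo 0 y₀) (hy : y ∈ Ioo 0 y₀) :
    radialEnergy a k u v x ≤ radialEnergy a k u v y * exp (lam * y₀ / |k| * y₀) := by
  have hk' : 0 < |k| := abs_pos.2 hk
  have hderiv (z) (hz : z ∈ Ioo 0 y₀) :
      |2 * lam * z * radialCross a u v z| ≤ lam * y₀ / |k| * radialEnergy a k u v z := by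
    have hE := two_mul_abs_mul_abs_radialCross_le (k := k) (u := u) (v := v) (a := a) hz.1.le
    have : 0 ≤ lam * y₀ := mul_nonneg hlam (hz.1.trans hz.2).le
    rw [abs_mul, abs_of_nonneg (by nlinarith [hz.1] : 0 ≤ 2 * lam * z),
      div_mul_eq_mul_div, le_div_iff₀ hk']
    calc 2 * lam * z * |radialCross a u v z| * |k|
        = lam * z * (2 * |k| * |radialCross a u v z|) := by ring
      _ ≤ lam * y₀ * radialEnergy a k u v z := by gcongr; exact hz.2.le
  refine (le_mul_exp_of_abs_deriv_le (convex_Ioo 0 y₀) (fun z hz => h.hasDerivAt_radialEnergy hz)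
    hderiv hx hy).trans ?_
  have : 0 ≤ lam * y₀ / |k| := div_nonneg (mul_nonneg hlam (hx.1.trans hx.2).le) hk'.le
  gcongr
  · exact radialEnergy_nonneg hy.1.le
  · rw [abs_le]; constructor <;> linarith [hx.1, hx.2, hy.1, hy.2]

lemma continuousAt_radialDensity (h : IsRadialPair a lam k y₀ u v) {y : ℝ}
    (hy : y ∈ Ioo 0 y₀) :
    ContinuousAt (radialDensity a u) y :=
  (((h y hy).1.continuousAt.norm.pow 2).mul
    (hasDerivAt_rpow_neg_two_mul a hy.1.ne').continuousAt).div continuousAt_id hy.1.ne'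

lemma mul_log_sub_le_integral (h : IsRadialPair a lam k y₀ u v) (hlam : 0 ≤ lam) {ε q b : ℝ}
    (hq : 0 < q) (hqb : q ≤ b) (hb : b < y₀)
    (hε : ∀ x ∈ Icc q b, ε ≤ radialEnergy a k u v x) :
    ε * log (b / q) - (radialCross a u v b - radialCross a u v q)
      ≤ ∫ x in q..b, 2 * k ^ 2 * radialDensity a u x := by
  have hsub : Icc q b ⊆ Ioo 0 y₀ := fun x hx => ⟨hq.trans_le hx.1, hx.2.trans_lt hb⟩
  have hg : ∀ x ∈ Icc q b, HasDerivAt (fun y => ε * log y - radialCross a u v y)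
      (ε * x⁻¹ - (‖v x‖ ^ 2 + (lam * x ^ 2 - k ^ 2) * ‖u x‖ ^ 2) * x ^ (-(2 * a)) / x) x :=
    fun x hx => ((hasDerivAt_log (hsub hx).1.ne').const_mul ε).sub
      (h.hasDerivAt_radialCross (hsub hx))
  have hφ : IntegrableOn (fun x => 2 * k ^ 2 * radialDensity a u x) (Icc q b) :=
    ContinuousOn.integrableOn_Icc fun x hx =>
      (continuousAt_const.mul (h.continuousAt_radialDensity (hsub hx))).continuousWithinAt
  have hftc := intervalIntegral.sub_le_integral_of_hasDeriv_right_of_le hqb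
    (fun x hx => (hg x hx).continuousAt.continuousWithinAt)
    (fun x hx => (hg x (Ioo_subset_Icc_self hx)).hasDerivWithinAt) hφ fun x hx => ?_
  · rw [log_div (hq.trans_le hqb).ne' hq.ne']
    linarith
  · have hx := Ioo_subset_Icc_self hx
    have hx0 : 0 < x := (hsub hx).1
    have hEx := hε x hx
    unfold radialEnergy at hEx
    have : 0 ≤ lam * x ^ 2 * ‖u x‖ ^ 2 * x ^ (-(2 * a)) := by
      have := rpow_nonneg hx0.le (-(2 * a))
      positivity
    calc ε * x⁻¹ - (‖v x‖ ^ 2 + (lam * x ^ 2 - k ^ 2) * ‖u x‖ ^ 2) * x ^ (-(2 * a)) / x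
        = (ε - (‖v x‖ ^ 2 + (lam * x ^ 2 - k ^ 2) * ‖u x‖ ^ 2) * x ^ (-(2 * a))) / x := by
          ring
      _ ≤ 2 * k ^ 2 * ‖u x‖ ^ 2 * x ^ (-(2 * a)) / x := by gcongr; linarith
      _ = 2 * k ^ 2 * radialDensity a u x := by unfold radialDensity; ring

lemma integrableOn_radialDensity (h : IsRadialPair a lam k y₀ u v) (hk : k ≠ 0) {M q : ℝ}
    (hM : ∀ x ∈ Ioo 0 y₀, radialEnergy a k u v x ≤ M) (hq : 0 < q) :
    IntegrableOn (radialDensity a u) (Ioo q y₀) :=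
  integrableOn_Ioo_of_le_div hq
    (fun _ hx => (h.continuousAt_radialDensity ⟨hq.trans hx.1, hx.2⟩).continuousWithinAt)
    (fun _ hx => radialDensity_nonneg (hq.trans hx.1).le)
    fun x hx => radialDensity_le hk (hq.trans hx.1) (hM x ⟨hq.trans hx.1, hx.2⟩)

lemma setIntegral_radialDensity_le (h : IsRadialPair a lam k y₀ u v) (hk : k ≠ 0) {M q : ℝ}
    (hM : ∀ x ∈ Ioo 0 y₀, radialEnergy a k u v x ≤ M) (hq : 0 < q) (hqy : q ≤ y₀) :
    ∫ x in Ioo q y₀, radialDensity a u x ≤ M / k ^ 2 * log (y₀ / q) :=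
  setIntegral_Ioo_le_mul_log hq hqy (h.integrableOn_radialDensity hk hM hq)
    fun x hx => radialDensity_le hk (hq.trans hx.1) (hM x ⟨hq.trans hx.1, hx.2⟩)

lemma mul_log_sub_le_setIntegral_radialDensity (h : IsRadialPair a lam k y₀ u v)
    (hlam : 0 ≤ lam) (hk : k ≠ 0) {ε M q b : ℝ} (hε : ∀ x ∈ Ioo 0 y₀, ε ≤ radialEnergy a k u v x)
    (hM : ∀ x ∈ Ioo 0 y₀, radialEnergy a k u v x ≤ M) (hq : 0 < q) (hqb : q ≤ b)
    (hb : b < y₀) :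
    ε * log (b / q) - M / |k| ≤ 2 * k ^ 2 * ∫ x in Ioo q y₀, radialDensity a u x := by
  have hftc := h.mul_log_sub_le_integral hlam hq hqb hb
    fun x hx => hε x ⟨hq.trans_le hx.1, hx.2.trans_lt hb⟩
  rw [intervalIntegral.integral_const_mul, intervalIntegral.integral_of_le hqb,
    integral_Ioc_eq_integral_Ioo] at hftc
  have hmono : ∫ x in Ioo q b, radialDensity a u x ≤ ∫ x in Ioo q y₀, radialDensity a u x :=
    setIntegral_mono_set (h.integrableOn_radialDensity hk hM hq)
      (ae_restrict_of_forall_mem measurableSet_Ioo fun x hx =>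
        radialDensity_nonneg (hq.trans hx.1).le)
      (Ioo_subset_Ioo_right hb.le).eventuallyLE
  have hG (x) (hx : x ∈ Ioo 0 y₀) : 2 * |radialCross a u v x| ≤ M / |k| := by
    rw [le_div_iff₀ (abs_pos.2 hk), mul_right_comm]
    exact (two_mul_abs_mul_abs_radialCross_le hx.1.le).trans (hM x hx)
  have hGb := hG b ⟨hq.trans_le hqb, hb⟩
  have hGq := hG q ⟨hq, hqb.trans_lt hb⟩
  have hk2 : 0 ≤ 2 * k ^ 2 := by positivity
  linarith [mul_le_mul_of_nonneg_left hmono hk2,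
    le_abs_self (radialCross a u v b), neg_abs_le (radialCross a u v q)]

theorem eq_zero_of_liminf_eq_zero (h : IsRadialPair a lam k y₀ u v) (hlam : 0 ≤ lam)
    (hk : k ≠ 0)
    (hlim : liminf (fun R => (log R)⁻¹ * ∫ y in Ioo R⁻¹ y₀, radialDensity a u y) atTop = 0)
    {y₁ : ℝ} (hy₁ : y₁ ∈ Ioo 0 y₀) : u y₁ = 0 := by
  by_contra hu
  set M := exp (lam * y₀ / |k| * y₀)
  set E₁ := radialEnergy a k u v y₁
  have hE₁ : 0 < E₁ := by
    have := norm_pos_iff.2 hu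
    have := rpow_pos_of_pos hy₁.1 (-(2 * a))
    unfold E₁ radialEnergy
    positivity
  have hupper (x) (hx : x ∈ Ioo 0 y₀) : radialEnergy a k u v x ≤ E₁ * M :=
    h.radialEnergy_le_mul_exp hlam hk hx hy₁
  have hlower (x) (hx : x ∈ Ioo 0 y₀) : E₁ / M ≤ radialEnergy a k u v x :=
    (div_le_iff₀ (exp_pos _)).2 (h.radialEnergy_le_mul_exp hlam hk hy₁ hx)
  have hk2 : 0 < 2 * k ^ 2 := by positivity
  refine (liminf_inv_log_mul_pos (c := E₁ / M / (2 * k ^ 2))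
    (A := (E₁ / M * log y₁ - E₁ * M / |k|) / (2 * k ^ 2)) (D := E₁ * M / k ^ 2)
    (B := E₁ * M / k ^ 2 * log y₀) (by positivity) ?_ ?_).ne' hlim
  · filter_upwards [eventually_gt_atTop y₁⁻¹] with R hR
    have hR0 : 0 < R := (inv_pos.2 hy₁.1).trans hR
    have hq : R⁻¹ < y₁ := by rwa [inv_lt_comm₀ hR0 hy₁.1]
    have hlow := h.mul_log_sub_le_setIntegral_radialDensity hlam hk hlower hupper
      (inv_pos.2 hR0) hq.le hy₁.2
    rw [div_inv_eq_mul, log_mul hy₁.1.ne' hR0.ne'] at hlow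
    rw [div_mul_eq_mul_div, ← add_div, div_le_iff₀ hk2]
    linarith
  · filter_upwards [eventually_gt_atTop y₀⁻¹] with R hR
    have hy₀ := hy₁.1.trans hy₁.2
    have hR0 : 0 < R := (inv_pos.2 hy₀).trans hR
    have hq : R⁻¹ < y₀ := by rwa [inv_lt_comm₀ hR0 hy₀]
    refine (h.setIntegral_radialDensity_le hk hupper (inv_pos.2 hR0) hq.le).trans_eq ?_
    rw [div_inv_eq_mul, log_mul hy₀.ne' hR0.ne']
    ring

end IsRadialPair

end InnerProductSpace

lemma isRadialPair_of_ode {a lam k y₀ : ℝ} {u u' u'' : ℝ → ℂ}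
    (hu : ∀ y ∈ Ioo 0 y₀, HasDerivAt u (u' y) y ∧ HasDerivAt u' (u'' y) y ∧
      (y : ℂ) ^ 2 * (-(u'' y) + lam * u y) + (2 * a - 1) * y * u' y - a ^ 2 * u y = k ^ 2 * u y) :
    IsRadialPair a lam k y₀ u fun y => y * u' y - a * u y := by
  intro y hy
  obtain ⟨hu', hu'', hode⟩ := hu y hy
  have hy0 : (y : ℂ) ≠ 0 := Complex.ofReal_ne_zero.2 hy.1.ne'
  constructor
  · refine hu'.congr_deriv ?_
    simp only [Complex.real_smul]
    push_cast
    field_simp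
    ring
  · refine (((hasDerivAt_id' y).ofReal_comp.mul hu'').sub
      (hu'.const_mul (a : ℂ))).congr_deriv ?_
    simp only [Complex.real_smul]
    push_cast
    field_simp
    linear_combination -hode

theorem fastest_decay_implies_zero_general
    (n : ℕ) (k lam y₀ : ℝ) (hk : 0 < k) (hlam : 0 < lam)
    (u u' u'' : ℝ → ℂ)
    (hu : ∀ y ∈ Ioo (0 : ℝ) y₀, HasDerivAt u (u' y) y ∧ HasDerivAt u' (u'' y) y ∧
      (y : ℂ) ^ 2 * (-(u'' y) + (lam : ℂ) * u y) + ((n : ℂ) - 2) * (y : ℂ) * u' y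
        - (((n : ℂ) - 1) ^ 2 / 4) * u y = (k : ℂ) ^ 2 * u y)
    (hlim : Filter.liminf (fun R : ℝ =>
        (Real.log R)⁻¹ * ∫ y in Ioo R⁻¹ y₀, ‖u y‖ ^ 2 / y ^ n) atTop = 0) :
    ∀ y ∈ Ioo (0 : ℝ) y₀, u y = 0 := by
  set a : ℝ := ((n : ℝ) - 1) / 2
  have hpair : IsRadialPair a lam k y₀ u fun y => y * u' y - a * u y :=
    isRadialPair_of_ode fun y hy => by
      obtain ⟨hu', hu'', hode⟩ := hu y hy
      refine ⟨hu', hu'', ?_⟩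
      rw [← hode]
      push_cast [a]
      ring
  refine fun y hy => hpair.eq_zero_of_liminf_eq_zero hlam.le hk.ne' ?_ hy
  rw [← hlim]
  refine liminf_congr ?_
  filter_upwards [eventually_gt_atTop 0] with R hR
  congr 1
  refine setIntegral_congr_fun measurableSet_Ioo fun x hx => ?_
  have hx0 : 0 < x := (inv_pos.2 hR).trans hx.1
  rw [radialDensity, show -(2 * a) = 1 - n by ring, rpow_sub hx0, rpow_one, rpow_natCast]
  field_simp

/-- Let `u` solve `y²(-u'' + λ_m u) + (n-2) y u' - ((n-1)²/4) u = k² u` on `(0, y₀)` with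
`k > 0`, `λ_m > 0`.  If `liminf_{R→∞} (1/log R) ∫_{1/R}^{y₀} |u(y)|² dy/yⁿ = 0`, then
`u ≡ 0` on `(0, y₀)`. -/
theorem fastest_decay_implies_zero
    (n : ℕ) (hn : 2 ≤ n) (k lam y₀ : ℝ) (hk : 0 < k) (hlam : 0 < lam) (hy₀ : 0 < y₀)
    (u u' u'' : ℝ → ℂ)
    (hu : ∀ y ∈ Ioo (0 : ℝ) y₀, HasDerivAt u (u' y) y ∧ HasDerivAt u' (u'' y) y ∧
      (y : ℂ) ^ 2 * (-(u'' y) + (lam : ℂ) * u y) + ((n : ℂ) - 2) * (y : ℂ) * u' y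
        - (((n : ℂ) - 1) ^ 2 / 4) * u y = (k : ℂ) ^ 2 * u y)
    (hlim : Filter.liminf (fun R : ℝ =>
        (Real.log R)⁻¹ * ∫ y in Ioo R⁻¹ y₀, ‖u y‖ ^ 2 / y ^ n) atTop = 0) :
    ∀ y ∈ Ioo (0 : ℝ) y₀, u y = 0 :=
  fastest_decay_implies_zero_general n k lam y₀ hk hlam u u' u'' hu hlim
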